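/- Let n ≥ 1, let a : Fin n → ℝ and b ∈ ℝ satisfy a i > 0 for all i and b > 0, and let λ ∈ ℝ satisfy -b < λ and λ < a i for all i. Define the linear map f_λ on ℝ^{n+1} (coordinates x₀, x₁, …, x_n) by multiplying the coordinate x_i by Real.sqrt ((a i - λ)/(a i)) for i ≥ 1 and the coordinate x₀ by Real.sqrt ((b + λ)/b). If x ∈ ℝ^{n+1} satisfies ∑_{i=1}^n (x i)^2 + (x 0)^2 = 1 and q(x) = ∑_{i=1}^n (x i)^2 / a i - (x 0)^2 / b = 0, then f_λ x also satisfies ∑_{i=1}^n ((f_λ x) i)^2 + ((f_λ x) 0)^2 = 1 and q_λ(f_λ x) = ∑_{i=1}^n ((f_λ x) i)^2 / (a i - λ) - ((f_λ x) 0)^2 / (b + λ) = 0. (The map f_λ takes the spherical ellipsoid E to the confocal spherical ellipsoid E_λ.) -/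

import Mathlib

/-! Coordinatewise, scaling `t` by `√(d / c)` turns `t² / c` into `t² / d` and changes `t²` by
`(d - c) · t² / c`. With `d - c = -λ` on the coordinates `x_i` and `d - c = λ` on `x₀`, the
quadratic form `q_λ ∘ f_λ` is `q`, and `‖f_λ x‖² = ‖x‖² - λ q(x)`. -/

namespace SphereConfocal

variable {c d : ℝ}

lemma sq_sqrt_div_mul (hc : 0 < c) (hd : 0 ≤ d) (t : ℝ) :
    (√(d / c) * t) ^ 2 = d / c * t ^ 2 := by
  rw [mul_pow, Real.sq_sqrt (div_nonneg hd hc.le)]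

lemma sq_sqrt_div_mul_eq_add (hc : 0 < c) (hd : 0 ≤ d) (t : ℝ) :
    (√(d / c) * t) ^ 2 = t ^ 2 + (d - c) * (t ^ 2 / c) := by
  rw [sq_sqrt_div_mul hc hd]
  field_simp
  ring

lemma sq_sqrt_div_mul_div (hc : 0 < c) (hd : 0 < d) (t : ℝ) :
    (√(d / c) * t) ^ 2 / d = t ^ 2 / c := by
  rw [sq_sqrt_div_mul hc hd.le]
  field_simp

end SphereConfocal

open SphereConfocal Finset in
theorem sphere_confocal_map (n : ℕ) (a : Fin n → ℝ) (b : ℝ)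
    (ha : ∀ i, 0 < a i) (hb : 0 < b)
    (lam : ℝ) (hlam₁ : -b < lam) (hlam₂ : ∀ i, lam < a i)
    (f : (Fin (n + 1) → ℝ) →ₗ[ℝ] (Fin (n + 1) → ℝ))
    (hf0 : ∀ x : Fin (n + 1) → ℝ, f x 0 = Real.sqrt ((b + lam) / b) * x 0)
    (hfi : ∀ (x : Fin (n + 1) → ℝ) (i : Fin n),
      f x i.succ = Real.sqrt ((a i - lam) / a i) * x i.succ)
    (x : Fin (n + 1) → ℝ)
    (hsph : ∑ i : Fin n, (x i.succ) ^ 2 + (x 0) ^ 2 = 1)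
    (hq : ∑ i : Fin n, (x i.succ) ^ 2 / a i - (x 0) ^ 2 / b = 0) :
    (∑ i : Fin n, (f x i.succ) ^ 2 + (f x 0) ^ 2 = 1) ∧
      (∑ i : Fin n, (f x i.succ) ^ 2 / (a i - lam) - (f x 0) ^ 2 / (b + lam) = 0) := by
  have hb_lam : 0 < b + lam := by linarith
  have ha_lam : ∀ i, 0 < a i - lam := fun i => sub_pos.mpr (hlam₂ i)
  simp only [hf0, hfi]
  constructor
  · calc ∑ i, (√((a i - lam) / a i) * x i.succ) ^ 2 + (√((b + lam) / b) * x 0) ^ 2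
        = ∑ i, ((x i.succ) ^ 2 + (a i - lam - a i) * ((x i.succ) ^ 2 / a i))
          + ((x 0) ^ 2 + (b + lam - b) * ((x 0) ^ 2 / b)) := by
          rw [sq_sqrt_div_mul_eq_add hb hb_lam.le]
          congr 1
          exact sum_congr rfl fun i _ => sq_sqrt_div_mul_eq_add (ha i) (ha_lam i).le _
      _ = 1 := by
          simp only [sub_sub_cancel_left, add_sub_cancel_left, neg_mul, ← sub_eq_add_neg,
            sum_sub_distrib, ← mul_sum]
          linear_combination hsph - lam * hq
  · rw [sq_sqrt_div_mul_div hb hb_lam, ← hq]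
    congr 1
    exact sum_congr rfl fun i _ => sq_sqrt_div_mul_div (ha i) (ha_lam i) _
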